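/- arXiv:2403.15777 — 5 statements merged into one kernel-verified Lean document; each statement's English description precedes it below -/
import Mathlib

section
/- Let $(X_n, d_n)$ be a sequence of compact metric spaces and $\mathcal{F} = \{f_n\}$ a sequence of continuous surjective maps $f_n : X_n \to X_{n+1}$ such that every point of $X_{n+1}$ has a preimage with a well-defined local inverse branch on a ball of uniform radius $\delta_0 > 0$. If $\mathcal{F}$ is strongly equicontinuous and has the shadowing property, then $\mathcal{F}$ has the limit shadowing property: for any sequence $\{x_n\}$ with $\lim_{i \to \infty} d(f_i(x_i), x_{i+1}) = 0$, there exists $y \in X_0$ with $\lim_{i \to \infty} d(F_i(y), x_i) = 0$. -/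
open Metric Filter

private lemma heq_congr_f' {X : ℕ → Type*} (f : ∀ n, X n → X (n + 1))
    {a b : ℕ} (h : a = b) {u : X a} {v : X b} (huv : HEq u v) :
    HEq (f a u) (f b v) := by subst h; rw [eq_of_heq huv]

private lemma dist_congr' {X : ℕ → Type*} [∀ n, MetricSpace (X n)]
    {a b : ℕ} (h : a = b) {u u' : X a} {v v' : X b}
    (h1 : HEq u v) (h2 : HEq u' v') : dist u u' = dist v v' := by
  subst h; rw [eq_of_heq h1, eq_of_heq h2]

/-- Theorem 3.2: strong equicontinuity together with the shadowing property implies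
the limit shadowing property, for sequences of continuous surjections with
well-defined local inverse branches on balls of uniform radius `δ0`. -/
theorem strong_equicontinuous_shadowing_implies_limit_shadowing
    (X : ℕ → Type*) [∀ n, MetricSpace (X n)] [∀ n, CompactSpace (X n)]
    (f : ∀ n, X n → X (n + 1))
    (hcont : ∀ n, Continuous (f n))
    (hsurj : ∀ n, Function.Surjective (f n))
    -- `G m k : X m → X (m + k)` is the composition `f (m+k-1) ∘ ⋯ ∘ f m`
    (G : ∀ m k, X m → X (m + k))
    (hG0 : ∀ m (x : X m), G m 0 x = x)
    (hGS : ∀ m k (x : X m), G m (k + 1) x = f (m + k) (G m k x))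
    (F : ∀ n, X 0 → X n)
    (hF0 : ∀ x, F 0 x = x)
    (hFS : ∀ n x, F (n + 1) x = f n (F n x))
    -- local inverse branches on balls of uniform radius δ0
    (δ0 : ℝ) (hδ0 : 0 < δ0)
    (hbranch : ∀ n (w : X (n + 1)), ∃ z : X n, f n z = w ∧
      ∃ g : X (n + 1) → X n, g w = z ∧ ∀ y ∈ ball w δ0, f n (g y) = y)
    -- strong equicontinuity
    (hequi : ∀ ε > 0, ∃ δ > 0, ∀ m k (x y : X m),
      dist x y < δ → dist (G m k x) (G m k y) < ε)
    -- shadowing property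
    (hshadow : ∀ ε > 0, ∃ δ > 0, ∀ x : ∀ n, X n,
      (∀ n, dist (f n (x n)) (x (n + 1)) < δ) →
      ∃ z : X 0, ∀ n, dist (F n z) (x n) < ε) :
    -- limit shadowing property
    ∀ x : ∀ n, X n,
      Tendsto (fun i => dist (f i (x i)) (x (i + 1))) atTop (nhds 0) →
      ∃ y : X 0, Tendsto (fun i => dist (F i y) (x i)) atTop (nhds 0) := by
  intro x hx
  -- F n is surjective
  have hFsurj : ∀ n, Function.Surjective (F n) := by
    intro n
    induction n with
    | zero => exact fun w => ⟨w, hF0 w⟩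
    | succ n ih =>
      intro w
      obtain ⟨v, hv⟩ := hsurj n w
      obtain ⟨u, hu⟩ := ih v
      exact ⟨u, by rw [hFS, hu, hv]⟩
  -- bridge between F and G 0
  have hheq : ∀ n (a : X 0), HEq (F n a) (G 0 n a) := by
    intro n
    induction n with
    | zero =>
      intro a
      rw [hF0, hG0]
    | succ n ih =>
      intro a
      rw [hFS, hGS]
      exact heq_congr_f' f (Nat.zero_add n).symm (ih a)
  have hdistFG : ∀ n (a b : X 0), dist (F n a) (F n b) = dist (G 0 n a) (G 0 n b) :=
    fun n a b => dist_congr' (Nat.zero_add n).symm (hheq n a) (hheq n b)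
  -- equicontinuity of the family F n
  have hequiF : ∀ ε > 0, ∃ δ > 0, ∀ n (a b : X 0),
      dist a b < δ → dist (F n a) (F n b) < ε := by
    intro ε hε
    obtain ⟨δ, hδ, hδ'⟩ := hequi ε hε
    exact ⟨δ, hδ, fun n a b hab => (hdistFG n a b) ▸ hδ' 0 n a b hab⟩
  -- tendsto in a usable form
  have hx' : ∀ δ > (0:ℝ), ∃ N, ∀ i, N ≤ i → dist (f i (x i)) (x (i + 1)) < δ := by
    intro δ hδ
    obtain ⟨N, hN⟩ := (Metric.tendsto_atTop.mp hx) δ hδ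
    refine ⟨N, fun i hi => ?_⟩
    have := hN i hi
    rwa [Real.dist_eq, sub_zero, abs_of_nonneg dist_nonneg] at this
  -- tail shadowing from ordinary shadowing
  have htail : ∀ ε > (0:ℝ), ∃ δ > (0:ℝ), ∀ N,
      (∀ i, N ≤ i → dist (f i (x i)) (x (i + 1)) < δ) →
      ∃ z : X 0, ∀ i, N ≤ i → dist (F i z) (x i) < ε := by
    intro ε hε
    obtain ⟨δ, hδ, hδ'⟩ := hshadow ε hε
    refine ⟨δ, hδ, fun N hN => ?_⟩
    obtain ⟨z, hz⟩ := hFsurj N (x N)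
    have herr : ∀ n, dist (f n ((fun n => if N ≤ n then x n else F n z) n))
        ((fun n => if N ≤ n then x n else F n z) (n + 1)) < δ := by
      intro n
      by_cases h : N ≤ n
      · have h1 : N ≤ n + 1 := le_trans h (Nat.le_succ n)
        simp only [if_pos h, if_pos h1]
        exact hN n h
      · simp only [if_neg h]
        by_cases h2 : N ≤ n + 1
        · have h3 : N = n + 1 := le_antisymm h2 (Nat.lt_of_not_le h)
          simp only [if_pos h2]
          have hz' : F (n + 1) z = x (n + 1) := h3 ▸ hz
          rw [← hFS, hz', dist_self]
          exact hδ
        · simp only [if_neg h2, ← hFS, dist_self]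
          exact hδ
    obtain ⟨z', hz'⟩ := hδ' _ herr
    refine ⟨z', fun i hi => ?_⟩
    have := hz' i
    simpa only [if_pos hi] using this
  -- for each k pick a shadowing point for the tail with accuracy 1/(k+1)
  have hzk : ∀ k : ℕ, ∃ z : X 0, ∃ N, ∀ i, N ≤ i →
      dist (F i z) (x i) < (1 : ℝ) / (k + 1) := by
    intro k
    have hpos : (0:ℝ) < 1 / (k + 1) := by positivity
    obtain ⟨δ, hδ, hδ'⟩ := htail _ hpos
    obtain ⟨N, hN⟩ := hx' δ hδ
    obtain ⟨z, hz⟩ := hδ' N hN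
    exact ⟨z, N, hz⟩
  choose z Nk hzk using hzk
  -- extract a convergent subsequence by compactness
  obtain ⟨y, -, φ, hφ, hyt⟩ := isCompact_univ.tendsto_subseq
    (fun k => Set.mem_univ (z k))
  refine ⟨y, Metric.tendsto_atTop.mpr ?_⟩
  intro ε hε
  obtain ⟨δ, hδ, hδ'⟩ := hequiF (ε / 2) (by linarith)
  obtain ⟨j0, hj0⟩ := (Metric.tendsto_atTop.mp hyt) δ hδ
  obtain ⟨j1, hj1⟩ := exists_nat_gt (2 / ε)
  set j := max j0 j1 with hj
  have h1 : dist (z (φ j)) y < δ := hj0 j (le_max_left _ _)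
  have hj1' : (j1 : ℝ) ≤ φ j := by
    have : j1 ≤ φ j := le_trans (le_max_right j0 j1) hφ.le_apply
    exact_mod_cast this
  have h2 : (1 : ℝ) / (φ j + 1) < ε / 2 := by
    have ha : (0:ℝ) < (φ j : ℝ) + 1 := by positivity
    rw [div_lt_iff₀ ha]
    have : (2 / ε) < (φ j : ℝ) + 1 := by linarith
    calc (1:ℝ) = ε / 2 * (2 / ε) := by field_simp
    _ < ε / 2 * ((φ j : ℝ) + 1) := by
        apply mul_lt_mul_of_pos_left this (by linarith)
  refine ⟨Nk (φ j), fun i hi => ?_⟩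
  rw [Real.dist_eq, sub_zero, abs_of_nonneg dist_nonneg]
  calc dist (F i y) (x i)
      ≤ dist (F i y) (F i (z (φ j))) + dist (F i (z (φ j))) (x i) := dist_triangle _ _ _
    _ < ε / 2 + ε / 2 := by
        apply add_lt_add
        · exact hδ' i y (z (φ j)) (by rw [dist_comm]; exact h1)
        · exact lt_trans (hzk (φ j) i hi) h2
    _ = ε := by ring
end

section
/- Let $J_i \subseteq \mathbb{N}$ be a sequence of sets such that $\lim_{i \to \infty} \limsup_{k \to \infty} \frac{1}{k} \#(J_i \cap [0,k]) = 0$. Then there exist a set $J \subseteq \mathbb{N}$ of density zero and increasing sequences $\{m_i\}$ and $\{l_i\}$ with $m_0 = 0$ such that for every $i \geq 1$, $J \cap [m_{i-1}, m_i) = J_{l_i} \cap [m_{i-1}, m_i)$. Moreover, if each $J_i$ has density zero one can take $l_i = i$ for all $i$, and given any sequence of infinite sets $R_i \subseteq \mathbb{N}$ one can choose $m_i \in R_i$. -/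
/-!
Glue sets `A i` along blocks `[m (i - 1), m i)`. Fix positive `ε i → 0` such that `A i` has at
most `ε i * n` elements below every large `n`, and choose `m i ∈ R i` so large that this bound
holds from `m (i - 1)` on and `m (i - 1) ≤ ε i * m i`. For `m j ≤ n < m (j + 1)`, the points of
the glued set below `n` lie below `m (j - 1)` (at most `m (j - 1) ≤ ε j * n` of them), in `A j`
below `m j`, or in `A (j + 1)` below `n`, so there are at most `(2 ε j + ε (j + 1)) n` of them.
In general `A i = J (l i)` along a subsequence on which the upper densities drop below `2⁻ⁱ`.
-/

open Filter Topology
open scoped Classical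

def glue (A : ℕ → Set ℕ) (m : ℕ → ℕ) : Set ℕ :=
  ⋃ i, A (i + 1) ∩ Set.Ico (m i) (m (i + 1))

def blockIndex (m : ℕ → ℕ) (n : ℕ) : ℕ :=
  Nat.findGreatest (fun j => m j ≤ n) n

lemma count_le_count_add_count_of_inter_Ico_subset {S B : Set ℕ} {a b n : ℕ}
    (hSB : S ∩ Set.Ico a b ⊆ B) (hn : n ≤ b) :
    Nat.count (· ∈ S) n ≤ Nat.count (· ∈ S) a + Nat.count (· ∈ B) n := by
  simp only [Nat.count_eq_card_filter_range]
  refine (Finset.card_le_card ?_).trans (Finset.card_union_le _ _)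
  intro x
  simp only [Finset.mem_filter, Finset.mem_range, Finset.mem_union]
  rintro ⟨hxn, hxS⟩
  by_cases hxa : x < a
  · exact .inl ⟨hxa, hxS⟩
  · exact .inr ⟨hxn, hSB ⟨hxS, not_lt.1 hxa, hxn.trans_le hn⟩⟩

section Blocks

variable {A : ℕ → Set ℕ} {m : ℕ → ℕ}

lemma glue_inter_Ico (hm : Monotone m) (i : ℕ) :
    glue A m ∩ Set.Ico (m i) (m (i + 1)) = A (i + 1) ∩ Set.Ico (m i) (m (i + 1)) := by
  ext x
  simp only [glue, Set.mem_inter_iff, Set.mem_iUnion]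
  constructor
  · rintro ⟨⟨j, hxA, hxj⟩, hxi⟩
    obtain rfl : j = i := by
      by_contra hji
      exact Set.disjoint_left.1 (hm.pairwise_disjoint_on_Ico_succ hji) hxj hxi
    exact ⟨hxA, hxi⟩
  · rintro ⟨hxA, hxi⟩
    exact ⟨⟨i, hxA, hxi⟩, hxi⟩

lemma glue_inter_Ico_sub_one (hm : Monotone m) {i : ℕ} (hi : 1 ≤ i) :
    glue A m ∩ Set.Ico (m (i - 1)) (m i) = A i ∩ Set.Ico (m (i - 1)) (m i) := by
  obtain ⟨k, rfl⟩ := Nat.exists_eq_add_of_le' hi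
  exact glue_inter_Ico hm k

lemma apply_blockIndex_le {n : ℕ} (hn : m 0 ≤ n) : m (blockIndex m n) ≤ n :=
  Nat.findGreatest_spec (P := fun j => m j ≤ n) (Nat.zero_le n) hn

lemma lt_apply_blockIndex_succ (hm : StrictMono m) (n : ℕ) : n < m (blockIndex m n + 1) := by
  by_cases hb : blockIndex m n + 1 ≤ n
  · exact not_le.1 (Nat.findGreatest_is_greatest (P := fun j => m j ≤ n) (Nat.lt_succ_self _) hb)
  · exact (not_le.1 hb).trans_le (hm.id_le _)

lemma tendsto_blockIndex (hm : StrictMono m) : Tendsto (blockIndex m) atTop atTop :=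
  tendsto_atTop_atTop.2 fun j =>
    ⟨m j, fun _ hn => Nat.le_findGreatest ((hm.id_le j).trans hn) hn⟩

variable {ε : ℕ → ℝ}

lemma count_glue_le (hm : StrictMono m)
    (hA : ∀ j ≥ 1, ∀ n ≥ m j, (Nat.count (· ∈ A (j + 1)) n : ℝ) ≤ ε (j + 1) * n)
    (hgrowth : ∀ j, (m j : ℝ) ≤ ε (j + 1) * m (j + 1)) {j n : ℕ} (hj : 2 ≤ j)
    (hn₁ : m j ≤ n) (hn₂ : n ≤ m (j + 1)) :
    (Nat.count (· ∈ glue A m) n : ℝ) ≤ (2 * ε j + ε (j + 1)) * n := by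
  obtain ⟨k, rfl⟩ := Nat.exists_eq_add_of_le' (show 1 ≤ j by omega)
  have hsub : ∀ i, glue A m ∩ Set.Ico (m i) (m (i + 1)) ⊆ A (i + 1) := fun i =>
    (glue_inter_Ico hm.monotone i).subset.trans Set.inter_subset_left
  have hcur := count_le_count_add_count_of_inter_Ico_subset (hsub (k + 1)) hn₂
  have hprev := count_le_count_add_count_of_inter_Ico_subset (hsub k) le_rfl
  have hinit : Nat.count (· ∈ glue A m) (m k) ≤ m k := Nat.count_le _
  have hAprev := hA k (by omega) (m (k + 1)) (hm.monotone k.le_succ)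
  have hAcur := hA (k + 1) (by omega) n hn₁
  have hε : 0 ≤ ε (k + 1) :=
    nonneg_of_mul_nonneg_left ((Nat.cast_nonneg _).trans (hgrowth k))
      (Nat.cast_pos.2 ((Nat.zero_le _).trans_lt (hm k.lt_succ_self)))
  have hmn : ε (k + 1) * m (k + 1) ≤ ε (k + 1) * n :=
    mul_le_mul_of_nonneg_left (Nat.cast_le.2 hn₁) hε
  have hmk := hgrowth k
  rify at hcur hprev hinit
  linarith

theorem tendsto_count_glue_div (hm : StrictMono m) (hε : Tendsto ε atTop (𝓝 0))
    (hA : ∀ j ≥ 1, ∀ n ≥ m j, (Nat.count (· ∈ A (j + 1)) n : ℝ) ≤ ε (j + 1) * n)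
    (hgrowth : ∀ j, (m j : ℝ) ≤ ε (j + 1) * m (j + 1)) :
    Tendsto (fun n => (Nat.count (· ∈ glue A m) n : ℝ) / n) atTop (𝓝 0) := by
  have hb := tendsto_blockIndex hm
  have hbound :
      Tendsto (fun n => 2 * ε (blockIndex m n) + ε (blockIndex m n + 1)) atTop (𝓝 0) := by
    simpa using ((hε.comp hb).const_mul 2).add (hε.comp ((tendsto_add_atTop_nat 1).comp hb))
  refine squeeze_zero' (Eventually.of_forall fun n => by positivity) ?_ hbound
  filter_upwards [hb.eventually_ge_atTop 2, eventually_ge_atTop (m 0), eventually_gt_atTop 0]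
    with n hb2 hn0 hnpos
  rw [div_le_iff₀ (Nat.cast_pos.2 hnpos)]
  exact count_glue_le hm hA hgrowth hb2 (apply_blockIndex_le hn0)
    (lt_apply_blockIndex_succ hm n).le

end Blocks

lemma exists_strictMono_mem_forall_lt (R : ℕ → Set ℕ) (hR : ∀ i, (R i).Infinite)
    (L : ℕ → ℕ → ℕ) :
    ∃ m : ℕ → ℕ, m 0 = 0 ∧ StrictMono m ∧ (∀ i ≥ 1, m i ∈ R i) ∧
      ∀ i, L i (m i) < m (i + 1) := by
  choose f hf using fun i x => (hR (i + 1)).exists_gt (max x (L i x))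
  let m : ℕ → ℕ := fun i => Nat.rec 0 (fun i x => f i x) i
  refine ⟨m, rfl, strictMono_nat_of_lt_succ fun i => (le_max_left _ _).trans_lt (hf i (m i)).2,
    fun i hi => ?_, fun i => (le_max_right _ _).trans_lt (hf i (m i)).2⟩
  obtain ⟨k, rfl⟩ := Nat.exists_eq_add_of_le' hi
  exact (hf k (m k)).1

theorem exists_tendsto_count_glue_div (A : ℕ → Set ℕ) {ε : ℕ → ℝ}
    (hε_pos : ∀ i, 0 < ε i) (hε : Tendsto ε atTop (𝓝 0))
    (hA : ∀ i, ∀ᶠ n in atTop, (Nat.count (· ∈ A i) n : ℝ) ≤ ε i * n)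
    (R : ℕ → Set ℕ) (hR : ∀ i, (R i).Infinite) :
    ∃ m : ℕ → ℕ, m 0 = 0 ∧ StrictMono m ∧ (∀ i ≥ 1, m i ∈ R i) ∧
      Tendsto (fun n => (Nat.count (· ∈ glue A m) n : ℝ) / n) atTop (𝓝 0) := by
  choose T hT using fun i => eventually_atTop.1 (hA i)
  obtain ⟨m, hm0, hm, hmR, hL⟩ :=
    exists_strictMono_mem_forall_lt R hR fun i x => max (T (i + 2)) ⌈x / ε (i + 1)⌉₊
  refine ⟨m, hm0, hm, hmR, tendsto_count_glue_div hm hε ?_ fun j => ?_⟩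
  · intro j hj n hn
    obtain ⟨i, rfl⟩ := Nat.exists_eq_add_of_le' hj
    exact hT _ n (((le_max_left _ _).trans (hL i).le).trans hn)
  · have hceil : (m j : ℝ) / ε (j + 1) ≤ m (j + 1) :=
      (Nat.le_ceil _).trans (Nat.cast_le.2 ((le_max_right _ _).trans (hL j).le))
    rw [div_le_iff₀ (hε_pos _)] at hceil
    linarith

lemma eventually_count_le_of_limsup_lt {A : Set ℕ} {c : ℝ}
    (h : limsup (fun k => (Nat.count (· ∈ A) (k + 1) : ℝ) / k) atTop < c) :
    ∀ᶠ n in atTop, (Nat.count (· ∈ A) n : ℝ) ≤ c * n := by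
  have hbdd :
      IsBoundedUnder (· ≤ ·) atTop fun k => (Nat.count (· ∈ A) (k + 1) : ℝ) / k := by
    refine isBoundedUnder_of_eventually_le (a := 2) ?_
    filter_upwards [eventually_gt_atTop 0] with k hk
    rw [div_le_iff₀ (Nat.cast_pos.2 hk)]
    have : Nat.count (· ∈ A) (k + 1) ≤ 2 * k := (Nat.count_le _).trans (by omega)
    exact_mod_cast this
  filter_upwards [eventually_lt_of_limsup_lt h hbdd, eventually_gt_atTop 0] with n hn hnpos
  rw [div_lt_iff₀ (Nat.cast_pos.2 hnpos)] at hn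
  exact (Nat.cast_le.2 (Nat.count_monotone _ n.le_succ)).trans hn.le

lemma eventually_count_le_of_tendsto {A : Set ℕ} {c : ℝ} (hc : 0 < c)
    (h : Tendsto (fun n => (Nat.count (· ∈ A) n : ℝ) / n) atTop (𝓝 0)) :
    ∀ᶠ n in atTop, (Nat.count (· ∈ A) n : ℝ) ≤ c * n := by
  filter_upwards [h.eventually (gt_mem_nhds hc), eventually_gt_atTop 0] with n hn hnpos
  rw [div_lt_iff₀ (Nat.cast_pos.2 hnpos)] at hn
  exact hn.le

/-- Lemma 3.1: gluing a sequence of sets `J i` of asymptotically vanishing upper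
density into a single set `J` of density zero, block by block, with `m i` chosen
in prescribed infinite sets `R i`; when each `J i` has density zero one can take
`l i = i`. -/
theorem glue_density_zero_sets
    (J : ℕ → Set ℕ)
    (h : Tendsto
      (fun i => limsup
        (fun k => ((((Finset.range (k + 1)).filter (fun j => j ∈ J i)).card : ℝ) / k))
        atTop)
      atTop (nhds 0))
    (R : ℕ → Set ℕ) (hR : ∀ i, (R i).Infinite) :
    (∃ (Js : Set ℕ) (m l : ℕ → ℕ),
      Tendsto (fun n => (((Finset.range n).filter (fun j => j ∈ Js)).card : ℝ) / n)
        atTop (nhds 0) ∧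
      m 0 = 0 ∧ StrictMono m ∧ StrictMono l ∧
      (∀ i ≥ 1, m i ∈ R i) ∧
      (∀ i ≥ 1, Js ∩ Set.Ico (m (i - 1)) (m i) = J (l i) ∩ Set.Ico (m (i - 1)) (m i))) ∧
    ((∀ i, Tendsto (fun n => (((Finset.range n).filter (fun j => j ∈ J i)).card : ℝ) / n)
        atTop (nhds 0)) →
      ∃ (Js : Set ℕ) (m : ℕ → ℕ),
        Tendsto (fun n => (((Finset.range n).filter (fun j => j ∈ Js)).card : ℝ) / n)
          atTop (nhds 0) ∧
        m 0 = 0 ∧ StrictMono m ∧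
        (∀ i ≥ 1, m i ∈ R i) ∧
        (∀ i ≥ 1, Js ∩ Set.Ico (m (i - 1)) (m i) = J i ∩ Set.Ico (m (i - 1)) (m i))) := by
  simp only [← Nat.count_eq_card_filter_range] at h ⊢
  have hε_pos : ∀ i, (0 : ℝ) < (1 / 2) ^ i := fun i => by positivity
  have hε : Tendsto (fun i => ((1 : ℝ) / 2) ^ i) atTop (𝓝 0) :=
    tendsto_pow_atTop_nhds_zero_of_lt_one (by norm_num) (by norm_num)
  refine ⟨?_, fun hd => ?_⟩
  · obtain ⟨l, hl, hlJ⟩ :=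
      extraction_forall_of_eventually fun i => h.eventually (gt_mem_nhds (hε_pos i))
    obtain ⟨m, hm0, hm, hmR, hdens⟩ :=
      exists_tendsto_count_glue_div (fun i => J (l i)) hε_pos hε
        (fun i => eventually_count_le_of_limsup_lt (hlJ i)) R hR
    exact ⟨glue (fun i => J (l i)) m, m, l, hdens, hm0, hm, hl, hmR,
      fun _ => glue_inter_Ico_sub_one hm.monotone⟩
  · obtain ⟨m, hm0, hm, hmR, hdens⟩ := exists_tendsto_count_glue_div J hε_pos hε
      (fun i => eventually_count_le_of_tendsto (hε_pos i) (hd i)) R hR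
    exact ⟨glue J m, m, hdens, hm0, hm, hmR, fun _ => glue_inter_Ico_sub_one hm.monotone⟩
end

section
/- Let $f : X \to X$ be a continuous map on a compact metric space, $A \subseteq X$ an invariant closed subset, and $\{x_i\}_{i=0}^{\infty}$ an asymptotic average pseudo-orbit of $f$ such that for every $\varepsilon > 0$ there exists $n$ with $\frac{1}{n}\#\{0 \leq i < n : d(f^i(x), A) < \varepsilon\} > 1 - \varepsilon$ for every $x \in X$. Then there exists a set $J \subseteq \mathbb{N}$ of density zero such that $\lim_{i \to \infty, i \notin J} d(x_i, A) = 0$. -/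
/-!
Cut time into blocks of a length `n₀` for which every orbit segment of length `n₀` spends all but
an `ε`-fraction of its time `ε`-close to `A`. By uniform continuity of `f`, on a block where all
jumps `d(f xᵢ, xᵢ₊₁)` are below some `δ` the pseudo-orbit shadows such a segment, so `d(xᵢ, A)`
averages `O(ε)` there; a block containing a jump `≥ δ` is paid for by the jumps, whose averages
tend to zero. Hence the Cesàro means of `d(xᵢ, A)` tend to zero, and a diagonal argument upgrades
Cesàro convergence of a nonnegative sequence to convergence off a set of density zero.
-/

open Filter Metric Finset Topology
open scoped Classical

def HasDensityZero (J : Set ℕ) : Prop :=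
  Tendsto (fun n : ℕ => (((range n).filter (fun i => i ∈ J)).card : ℝ) / n) atTop (𝓝 0)

lemma hasDensityZero_setOf_le_of_cesaro {a : ℕ → ℝ} (ha : ∀ i, 0 ≤ a i)
    (h : Tendsto (fun n => (∑ i ∈ range n, a i) / n) atTop (𝓝 0)) {c : ℝ} (hc : 0 < c) :
    HasDensityZero {i | c ≤ a i} := by
  have hmarkov : ∀ n, (((range n).filter (fun i => i ∈ {i | c ≤ a i})).card : ℝ) * c ≤
      ∑ i ∈ range n, a i := fun n => by
    rw [← nsmul_eq_mul]
    calc _ ≤ ∑ i ∈ (range n).filter (fun i => i ∈ {i | c ≤ a i}), a i :=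
          card_nsmul_le_sum _ _ _ fun i hi => (mem_filter.1 hi).2
      _ ≤ ∑ i ∈ range n, a i := sum_le_sum_of_subset_of_nonneg (filter_subset _ _)
          fun i _ _ => ha i
  refine squeeze_zero (fun n => by positivity) (fun n => ?_) (by simpa using h.div_const c)
  rw [div_right_comm]
  gcongr
  exact (le_div_iff₀ hc).2 (hmarkov n)

lemma exists_hasDensityZero_eventually_mem_of_mem {E : ℕ → Set ℕ} (hE : Monotone E)
    (h : ∀ k, HasDensityZero (E k)) :
    ∃ J : Set ℕ, HasDensityZero J ∧ ∀ k, ∀ᶠ i in atTop, i ∈ E k → i ∈ J := by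
  have hsmall : ∀ k, ∃ T, ∀ n ≥ T,
      (((range n).filter (fun i => i ∈ E k)).card : ℝ) / n < 1 / (k + 1) := fun k =>
    eventually_atTop.1 ((h k).eventually (gt_mem_nhds Nat.one_div_pos_of_nat))
  choose T hT using hsmall
  set N : ℕ → ℕ := fun k => max k (T k)
  -- Below `n`, `J` lies inside `E m` for the largest `m` with `N m ≤ n`, and `T m ≤ n`.
  refine ⟨{i | ∃ k, N k ≤ i ∧ i ∈ E k}, ?_,
    fun k => eventually_atTop.2 ⟨N k, fun i hi hik => ⟨k, hi, hik⟩⟩⟩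
  have hJ : ∀ K n, N K ≤ n →
      (((range n).filter (fun i => i ∈ {i | ∃ k, N k ≤ i ∧ i ∈ E k})).card : ℝ) / n <
        1 / (K + 1) := by
    intro K n hKn
    set m := Nat.findGreatest (fun m => N m ≤ n) n
    have hle_m : ∀ k, N k ≤ n → k ≤ m := fun k hk =>
      Nat.le_findGreatest ((le_max_left _ _).trans hk) hk
    have hNm : N m ≤ n :=
      Nat.findGreatest_spec (P := fun m => N m ≤ n) ((le_max_left _ _).trans hKn) hKn
    have hsub : (range n).filter (fun i => i ∈ {i | ∃ k, N k ≤ i ∧ i ∈ E k}) ⊆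
        (range n).filter (fun i => i ∈ E m) := by
      intro i hi
      simp only [mem_filter, mem_range, Set.mem_ofPred_eq] at hi ⊢
      obtain ⟨hin, k, hki, hik⟩ := hi
      exact ⟨hin, hE (hle_m k (hki.trans hin.le)) hik⟩
    calc _ ≤ (((range n).filter (fun i => i ∈ E m)).card : ℝ) / n := by gcongr
      _ < 1 / (m + 1) := hT m n ((le_max_right _ _).trans hNm)
      _ ≤ 1 / (K + 1) := Nat.one_div_le_one_div (hle_m K hKn)
  refine tendsto_order.2 ⟨fun a ha => Eventually.of_forall fun n => ha.trans_le (by positivity),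
    fun a ha => ?_⟩
  obtain ⟨K, hK⟩ := exists_nat_one_div_lt ha
  exact eventually_atTop.2 ⟨N K, fun n hn => (hJ K n hn).trans hK⟩

lemma exists_hasDensityZero_of_cesaro {a : ℕ → ℝ} (ha : ∀ i, 0 ≤ a i)
    (h : Tendsto (fun n => (∑ i ∈ range n, a i) / n) atTop (𝓝 0)) :
    ∃ J : Set ℕ, HasDensityZero J ∧ ∀ ε > 0, ∃ N : ℕ, ∀ i ≥ N, i ∉ J → a i < ε := by
  obtain ⟨J, hJ, hEJ⟩ := exists_hasDensityZero_eventually_mem_of_mem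
    (E := fun k => {i | 1 / ((k : ℝ) + 1) ≤ a i})
    (fun k l hkl i (hi : _ ≤ a i) => (Nat.one_div_le_one_div hkl).trans hi)
    (fun k => hasDensityZero_setOf_le_of_cesaro ha h Nat.one_div_pos_of_nat)
  refine ⟨J, hJ, fun ε hε => ?_⟩
  obtain ⟨k, hk⟩ := exists_nat_one_div_lt hε
  obtain ⟨N, hN⟩ := eventually_atTop.1 (hEJ k)
  exact ⟨N, fun i hi hiJ => (not_le.1 fun hik => hiJ (hN i hi hik)).trans hk⟩

lemma sum_range_le_of_forall_sum_block_le {b e : ℕ → ℝ} {D η C : ℝ} {n₀ : ℕ} (hn₀ : 0 < n₀)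
    (hb : ∀ i, b i ≤ D) (hD : 0 ≤ D) (he : ∀ i, 0 ≤ e i) (hη : 0 ≤ η) (hC : 0 ≤ C)
    (hblock : ∀ m, ∑ j ∈ range n₀, b (m + j) ≤ η * n₀ + C * ∑ j ∈ range n₀, e (m + j))
    (n : ℕ) : ∑ i ∈ range n, b i ≤ η * n + C * ∑ i ∈ range n, e i + n₀ * D := by
  induction n using Nat.strong_induction_on with
  | _ n ih =>
    rcases lt_or_ge n n₀ with hn | hn
    · have hsum_b : ∑ i ∈ range n, b i ≤ n₀ * D := calc
        _ ≤ n * D := by simpa using sum_le_sum fun i (_ : i ∈ range n) => hb i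
        _ ≤ n₀ * D := by gcongr
      have : 0 ≤ C * ∑ i ∈ range n, e i := mul_nonneg hC (sum_nonneg fun i _ => he i)
      have : 0 ≤ η * n := by positivity
      linarith
    · obtain ⟨m, rfl⟩ := Nat.exists_eq_add_of_le' hn
      have := ih m (by omega)
      rw [sum_range_add, sum_range_add, mul_add C]
      push_cast
      linarith [hblock m]

lemma tendsto_cesaro_zero_of_forall_sum_le {b e : ℕ → ℝ} (hb : ∀ i, 0 ≤ b i)
    (he : Tendsto (fun n => (∑ i ∈ range n, e i) / n) atTop (𝓝 0))
    (h : ∀ η > 0, ∃ C K : ℝ, ∀ n, ∑ i ∈ range n, b i ≤ η * n + C * ∑ i ∈ range n, e i + K) :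
    Tendsto (fun n => (∑ i ∈ range n, b i) / n) atTop (𝓝 0) := by
  refine tendsto_order.2 ⟨fun a ha => Eventually.of_forall fun n =>
    ha.trans_le (by positivity [sum_nonneg fun i (_ : i ∈ range n) => hb i]), fun ε hε => ?_⟩
  obtain ⟨C, K, hCK⟩ := h (ε / 2) (half_pos hε)
  have hbound : Tendsto (fun n : ℕ => ε / 2 + C * ((∑ i ∈ range n, e i) / n) + K / n) atTop
      (𝓝 (ε / 2)) := by
    simpa using (tendsto_const_nhds.add (he.const_mul C)).add
      (tendsto_const_div_atTop_nhds_zero_nat K)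
  filter_upwards [hbound.eventually (gt_mem_nhds (half_lt_self hε)), eventually_gt_atTop 0]
    with n hn hn0
  refine lt_of_le_of_lt ?_ hn
  rw [div_le_iff₀ (by exact_mod_cast hn0)]
  have : (n : ℝ) ≠ 0 := by positivity
  calc _ ≤ ε / 2 * n + C * ∑ i ∈ range n, e i + K := hCK n
    _ = _ := by field_simp

section Dynamics

variable {X : Type*} [PseudoMetricSpace X] {f : X → X} {A : Set X}

lemma UniformContinuous.exists_dist_iterate_lt (hf : UniformContinuous f) (n : ℕ) {ε : ℝ}
    (hε : 0 < ε) : ∃ δ > 0, ∀ y : ℕ → X, (∀ j < n, dist (f (y j)) (y (j + 1)) < δ) →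
      ∀ j ≤ n, dist (y j) (f^[j] (y 0)) < ε := by
  induction n generalizing ε with
  | zero => exact ⟨ε, hε, fun y _ j hj => by simpa [Nat.le_zero.1 hj] using hε⟩
  | succ n ih =>
    obtain ⟨η, hη, hfη⟩ := Metric.uniformContinuous_iff.1 hf (ε / 2) (half_pos hε)
    obtain ⟨δ, hδ, hshadow⟩ := ih (lt_min hη (half_pos hε))
    refine ⟨min δ (ε / 2), lt_min hδ (half_pos hε), fun y hy j hj => ?_⟩
    have hy' : ∀ j < n, dist (f (y j)) (y (j + 1)) < δ := fun j hj =>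
      (hy j (by omega)).trans_le (min_le_left _ _)
    rcases hj.lt_or_eq with hj | rfl
    · exact (hshadow y hy' j (by omega)).trans_le ((min_le_right _ _).trans (half_le_self hε.le))
    · have hn := hshadow y hy' n le_rfl
      calc dist (y (n + 1)) (f^[n + 1] (y 0))
          ≤ dist (f (y n)) (y (n + 1)) + dist (f (y n)) (f (f^[n] (y 0))) := by
            rw [Function.iterate_succ_apply']; exact dist_triangle_left _ _ _
        _ < ε / 2 + ε / 2 := add_lt_add ((hy n (by omega)).trans_le (min_le_right _ _))
            (hfη (hn.trans_le (min_le_left _ _)))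
        _ = ε := add_halves ε

lemma infDist_le_diam_univ [BoundedSpace X] (y : X) (A : Set X) :
    infDist y A ≤ diam (Set.univ : Set X) := by
  rcases A.eq_empty_or_nonempty with rfl | ⟨a, ha⟩
  · simpa using diam_nonneg
  · exact (infDist_le_dist_of_mem ha).trans
      (dist_le_diam_of_mem (Bornology.IsBounded.all _) (Set.mem_univ _) (Set.mem_univ _))

lemma sum_range_infDist_le_of_dist_iterate_lt {D ε : ℝ} {n : ℕ} {y : ℕ → X}
    (hD : ∀ z, infDist z A ≤ D) (hn : 0 < n)
    (hnear : (((range n).filter (fun j => infDist (f^[j] (y 0)) A < ε)).card : ℝ) / n > 1 - ε)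
    (hy : ∀ j < n, dist (y j) (f^[j] (y 0)) < ε) :
    ∑ j ∈ range n, infDist (y j) A ≤ (2 + D) * ε * n := by
  set G := (range n).filter (fun j => infDist (f^[j] (y 0)) A < ε)
  set B := (range n).filter (fun j => ¬ infDist (f^[j] (y 0)) A < ε)
  have hε : 0 < ε := dist_nonneg.trans_lt (hy 0 hn)
  have hD0 : 0 ≤ D := infDist_nonneg.trans (hD (y 0))
  have hcard : (G.card : ℝ) + B.card = n := by
    exact_mod_cast (card_filter_add_card_filter_not _).trans (card_range n)
  have hG : (G.card : ℝ) > (1 - ε) * n := (lt_div_iff₀ (by exact_mod_cast hn)).1 hnear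
  have hsum_G : ∑ j ∈ G, infDist (y j) A ≤ G.card * (2 * ε) := by
    rw [← nsmul_eq_mul]
    refine sum_le_card_nsmul _ _ _ fun j hj => ?_
    rw [mem_filter, mem_range] at hj
    linarith [infDist_le_infDist_add_dist (x := y j) (y := f^[j] (y 0)) (s := A), hy j hj.1]
  have hsum_B : ∑ j ∈ B, infDist (y j) A ≤ B.card * D := by
    rw [← nsmul_eq_mul]
    exact sum_le_card_nsmul _ _ _ fun j _ => hD _
  rw [← sum_filter_add_sum_filter_not (range n) (fun j => infDist (f^[j] (y 0)) A < ε)]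
  nlinarith

lemma exists_sum_range_infDist_le [BoundedSpace X] (hf : UniformContinuous f)
    (hdens : ∀ ε > 0, ∃ n : ℕ, 0 < n ∧ ∀ z : X,
      (((range n).filter (fun i => infDist (f^[i] z) A < ε)).card : ℝ) / n > 1 - ε)
    {η : ℝ} (hη : 0 < η) :
    ∃ n₀ > 0, ∃ C ≥ 0, ∀ y : ℕ → X, ∑ j ∈ range n₀, infDist (y j) A ≤
      η * n₀ + C * ∑ j ∈ range n₀, dist (f (y j)) (y (j + 1)) := by
  set D := diam (Set.univ : Set X)
  have hD0 : 0 ≤ D := diam_nonneg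
  obtain ⟨n₀, hn₀, hnear⟩ := hdens (η / (2 + D)) (by positivity)
  obtain ⟨δ, hδ, hshadow⟩ := hf.exists_dist_iterate_lt n₀ (ε := η / (2 + D)) (by positivity)
  -- A single jump of size `δ` already pays for the trivial bound `n₀ * D` on the block.
  refine ⟨n₀, hn₀, n₀ * D / δ, by positivity, fun y => ?_⟩
  have he : 0 ≤ ∑ j ∈ range n₀, dist (f (y j)) (y (j + 1)) := sum_nonneg fun _ _ => dist_nonneg
  by_cases hpseudo : ∀ j < n₀, dist (f (y j)) (y (j + 1)) < δ
  · have := sum_range_infDist_le_of_dist_iterate_lt (fun z => infDist_le_diam_univ z A) hn₀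
      (hnear (y 0)) fun j hj => hshadow y hpseudo j hj.le
    rw [mul_div_cancel₀ _ (by positivity)] at this
    nlinarith [mul_nonneg (by positivity : (0 : ℝ) ≤ n₀ * D / δ) he]
  · push Not at hpseudo
    obtain ⟨j, hj, hjump⟩ := hpseudo
    have hjump_sum : δ ≤ ∑ j ∈ range n₀, dist (f (y j)) (y (j + 1)) :=
      hjump.trans (single_le_sum (f := fun j => dist (f (y j)) (y (j + 1)))
        (fun _ _ => dist_nonneg) (mem_range.2 hj))
    have htrivial : ∑ j ∈ range n₀, infDist (y j) A ≤ n₀ * D := by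
      simpa using sum_le_sum fun j (_ : j ∈ range n₀) => infDist_le_diam_univ (y j) A
    calc _ ≤ n₀ * D / δ * δ := by rw [div_mul_cancel₀ _ hδ.ne']; exact htrivial
      _ ≤ η * n₀ + n₀ * D / δ * ∑ j ∈ range n₀, dist (f (y j)) (y (j + 1)) := by
        nlinarith [mul_le_mul_of_nonneg_left hjump_sum (by positivity : (0 : ℝ) ≤ n₀ * D / δ)]

lemma tendsto_cesaro_infDist_zero [BoundedSpace X] (hf : UniformContinuous f) {x : ℕ → X}
    (hx : Tendsto (fun n => (∑ i ∈ range n, dist (f (x i)) (x (i + 1))) / n) atTop (𝓝 0))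
    (hdens : ∀ ε > 0, ∃ n : ℕ, 0 < n ∧ ∀ z : X,
      (((range n).filter (fun i => infDist (f^[i] z) A < ε)).card : ℝ) / n > 1 - ε) :
    Tendsto (fun n => (∑ i ∈ range n, infDist (x i) A) / n) atTop (𝓝 0) := by
  refine tendsto_cesaro_zero_of_forall_sum_le (fun i => infDist_nonneg) hx fun η hη => ?_
  obtain ⟨n₀, hn₀, C, hC, hblock⟩ := exists_sum_range_infDist_le hf hdens hη
  exact ⟨C, n₀ * diam Set.univ, sum_range_le_of_forall_sum_block_le hn₀
    (fun i => infDist_le_diam_univ _ A) diam_nonneg (fun _ => dist_nonneg) hη.le hC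
    fun m => by simpa only [add_assoc] using hblock fun j => x (m + j)⟩

end Dynamics

theorem aapo_converges_to_A_off_density_zero_general
    (X : Type*) [MetricSpace X] [CompactSpace X]
    (f : X → X) (hcont : Continuous f)
    (A : Set X)
    (x : ℕ → X)
    (hx : Tendsto (fun n => (∑ i ∈ Finset.range n, dist (f (x i)) (x (i + 1))) / n)
      atTop (nhds 0))
    (hdens : ∀ ε > 0, ∃ n : ℕ, 0 < n ∧ ∀ z : X,
      (((Finset.range n).filter (fun i => Metric.infDist (f^[i] z) A < ε)).card : ℝ) / n
        > 1 - ε) :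
    ∃ J : Set ℕ,
      Tendsto (fun n => (((Finset.range n).filter (fun i => i ∈ J)).card : ℝ) / n)
        atTop (nhds 0) ∧
      ∀ ε > 0, ∃ N : ℕ, ∀ i ≥ N, i ∉ J → Metric.infDist (x i) A < ε :=
  exists_hasDensityZero_of_cesaro (fun _ => infDist_nonneg)
    (tendsto_cesaro_infDist_zero (CompactSpace.uniformContinuous_of_continuous hcont) hx hdens)

/-- Lemma 3.2: an asymptotic average pseudo-orbit of `f` converges to the
invariant set `A` off a set of density zero, under the density assumption on
orbits near `A`. -/
theorem aapo_converges_to_A_off_density_zero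
    (X : Type*) [MetricSpace X] [CompactSpace X]
    (f : X → X) (hcont : Continuous f)
    (A : Set X) (hA_closed : IsClosed A) (hA_inv : Set.MapsTo f A A)
    (x : ℕ → X)
    (hx : Tendsto (fun n => (∑ i ∈ Finset.range n, dist (f (x i)) (x (i + 1))) / n)
      atTop (nhds 0))
    (hdens : ∀ ε > 0, ∃ n : ℕ, 0 < n ∧ ∀ z : X,
      (((Finset.range n).filter (fun i => Metric.infDist (f^[i] z) A < ε)).card : ℝ) / n
        > 1 - ε) :
    ∃ J : Set ℕ,
      Tendsto (fun n => (((Finset.range n).filter (fun i => i ∈ J)).card : ℝ) / n)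
        atTop (nhds 0) ∧
      ∀ ε > 0, ∃ N : ℕ, ∀ i ≥ N, i ∉ J → Metric.infDist (x i) A < ε :=
  aapo_converges_to_A_off_density_zero_general X f hcont A x hx hdens
end

section
/- Let $(X,d)$ be a compact metric space, $f : X \to X$ a continuous surjection that is equicontinuous (the family $\{f^n\}_{n \geq 1}$ is equicontinuous). If $f$ has the shadowing property, then $f$ has the limit shadowing property: for any sequence $\{x_i\}$ with $\lim_{i\to\infty} d(f(x_i), x_{i+1}) = 0$, there exists $y \in X$ with $\lim_{i\to\infty} d(f^i(y), x_i) = 0$. -/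
open Metric Filter

/-- Theorem 2.2: an equicontinuous continuous surjection of a compact metric space
with the shadowing property has the limit shadowing property. -/
theorem equicontinuous_shadowing_implies_limit_shadowing
    (X : Type*) [MetricSpace X] [CompactSpace X]
    (f : X → X) (hcont : Continuous f) (hsurj : Function.Surjective f)
    (hequi : ∀ ε > (0 : ℝ), ∃ δ > (0 : ℝ), ∀ x y : X, dist x y < δ →
      ∀ n : ℕ, 1 ≤ n → dist (f^[n] x) (f^[n] y) < ε)
    (hshadow : ∀ ε > (0 : ℝ), ∃ δ > (0 : ℝ), ∀ x : ℕ → X,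
      (∀ i, dist (f (x i)) (x (i + 1)) < δ) →
      ∃ y : X, ∀ i, dist (f^[i] y) (x i) < ε) :
    ∀ x : ℕ → X,
      Tendsto (fun i => dist (f (x i)) (x (i + 1))) atTop (nhds 0) →
      ∃ y : X, Tendsto (fun i => dist (f^[i] y) (x i)) atTop (nhds 0) := by
  intro x hx
  -- Step 1: for each k, find a point w whose orbit ε_k-shadows the tail of x
  have key : ∀ k : ℕ, ∃ (N : ℕ) (w : X),
      ∀ i, N ≤ i → dist (f^[i] w) (x i) < 1 / (k + 1) := by
    intro k
    have hk : (0:ℝ) < 1 / (k + 1) := by positivity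
    obtain ⟨δ, hδ, hsh⟩ := hshadow (1 / (k + 1)) hk
    have hev : ∀ᶠ i in atTop, dist (f (x i)) (x (i + 1)) < δ :=
      hx.eventually (gt_mem_nhds hδ)
    obtain ⟨N, hN⟩ := eventually_atTop.mp hev
    obtain ⟨z, hz⟩ := hsh (fun i => x (N + i)) (by
      intro i
      have h := hN (N + i) (Nat.le_add_right _ _)
      have : N + i + 1 = N + (i + 1) := by omega
      rw [this] at h
      exact h)
    obtain ⟨w, hw⟩ := (hsurj.iterate N) z
    refine ⟨N, w, fun i hi => ?_⟩
    have hfw : f^[i] w = f^[i - N] z := by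
      rw [← hw, ← Function.iterate_add_apply]
      congr 1
      omega
    have h2 := hz (i - N)
    have hiN : N + (i - N) = i := by omega
    rw [hiN] at h2
    rwa [hfw]
  choose N w hw using key
  obtain ⟨y, -, φ, hφ, hlim⟩ :=
    isCompact_univ.tendsto_subseq (fun k => (Set.mem_univ (w k)))
  refine ⟨y, Metric.tendsto_atTop.mpr ?_⟩
  intro ε hε
  obtain ⟨δ, hδ, hequi'⟩ := hequi (ε / 2) (by linarith)
  obtain ⟨j1, hj1⟩ := Metric.tendsto_atTop.mp hlim δ hδ
  obtain ⟨j2, hj2⟩ := exists_nat_gt (2 / ε)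
  set k := φ (max j1 j2) with hkdef
  have hdk : dist (w k) y < δ := hj1 _ (le_max_left _ _)
  have hkge : (j2 : ℝ) ≤ (k : ℝ) := by
    have h1 : max j1 j2 ≤ φ (max j1 j2) := hφ.le_apply
    have : j2 ≤ k := le_trans (le_max_right j1 j2) h1
    exact_mod_cast this
  have hk2 : 1 / ((k:ℝ) + 1) < ε / 2 := by
    have hlt : 2 / ε < (k:ℝ) + 1 := by linarith
    rw [div_lt_iff₀ hε] at hlt
    rw [div_lt_div_iff₀ (by positivity) (by norm_num)]
    nlinarith
  refine ⟨max (N k) 1, fun i hi => ?_⟩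
  have h1 : dist (f^[i] y) (f^[i] (w k)) < ε / 2 := by
    have := hequi' (w k) y hdk i (le_trans (le_max_right _ _) hi)
    rwa [dist_comm]
  have h2 : dist (f^[i] (w k)) (x i) < 1 / ((k:ℝ) + 1) :=
    hw k i (le_trans (le_max_left _ _) hi)
  have hfinal : dist (f^[i] y) (x i) < ε := by
    calc dist (f^[i] y) (x i)
        ≤ dist (f^[i] y) (f^[i] (w k)) + dist (f^[i] (w k)) (x i) := dist_triangle _ _ _
      _ < ε / 2 + ε / 2 := by linarith
      _ = ε := by ring
  simpa [Real.dist_eq, abs_of_nonneg dist_nonneg]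
end

section
/- Let $X$ be a compact metric space and $\mathcal{F} = \{f_n\}$ a sequence of continuous surjections $f_n : X \to X$ with the unique shadowing property (for every $\varepsilon > 0$ there are $\delta_n > 0$ such that every $\{\delta_n\}$-pseudo-orbit is $\varepsilon$-shadowed by a unique point). If $\{x_i\}$ is a $\{\delta_i\}$-pseudo-orbit with $x_{kn+j} = x_j$ for all $k \geq 0$, $0 \leq j < n$, and $f_{kn+j} = f_j$ for all $k \geq 0$, $0 \leq j < n$, then the unique $\varepsilon$-shadowing point $x$ satisfies $F_n(x) = x$. -/
open Metric Filter

/-- `iterNA f n = f (n-1) ∘ ⋯ ∘ f 0` for a non-autonomous system `f`. -/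
def iterNA {Z : Type*} (f : ℕ → Z → Z) : ℕ → Z → Z
  | 0, z => z
  | n + 1, z => f n (iterNA f n z)

/-- If `𝓕` has the unique shadowing property, then the unique shadowing point of an
`n`-periodic pseudo-orbit (with `n`-periodic maps) is a fixed point of `F n`. -/
theorem unique_shadowing_periodic_point
    (X : Type*) [MetricSpace X] [CompactSpace X]
    (f : ℕ → X → X)
    (hcont : ∀ n, Continuous (f n))
    (hsurj : ∀ n, Function.Surjective (f n))
    -- unique shadowing property
    (hUS : ∀ ε > (0 : ℝ), ∃ δ : ℕ → ℝ, (∀ i, 0 < δ i) ∧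
      ∀ x : ℕ → X, (∀ i, dist (f i (x i)) (x (i + 1)) < δ i) →
        ∃! z : X, ∀ i, dist (iterNA f i z) (x i) ≤ ε) :
    ∀ ε > (0 : ℝ), ∃ δ : ℕ → ℝ, (∀ i, 0 < δ i) ∧
      ∀ (x : ℕ → X) (n : ℕ), 0 < n →
        (∀ i, dist (f i (x i)) (x (i + 1)) < δ i) →
        (∀ k : ℕ, ∀ j < n, x (k * n + j) = x j) →
        (∀ k : ℕ, ∀ j < n, f (k * n + j) = f j) →
        ∃ z : X, (∀ i, dist (iterNA f i z) (x i) ≤ ε) ∧ iterNA f n z = z ∧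
          ∀ w : X, (∀ i, dist (iterNA f i w) (x i) ≤ ε) → w = z := by
  intro ε hε
  obtain ⟨δ, hδpos, hδ⟩ := hUS ε hε
  refine ⟨δ, hδpos, ?_⟩
  intro x n hn hpo hxper hfper
  obtain ⟨z, hz, hu⟩ := hδ x hpo
  -- f is n-periodic
  have hf : ∀ m, f (m + n) = f m := by
    intro m
    have h1 : f (m / n * n + m % n) = f (m % n) := hfper _ _ (Nat.mod_lt _ hn)
    have h2 : f ((m / n + 1) * n + m % n) = f (m % n) := hfper _ _ (Nat.mod_lt _ hn)
    have e1 : m / n * n + m % n = m := by rw [Nat.mul_comm]; exact Nat.div_add_mod m n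
    have e2 : (m / n + 1) * n + m % n = m + n := by rw [Nat.add_mul, Nat.one_mul, Nat.add_right_comm, e1]
    rw [e1] at h1; rw [e2] at h2; rw [h2, ← h1]
  have hx : ∀ m, x (m + n) = x m := by
    intro m
    have h1 : x (m / n * n + m % n) = x (m % n) := hxper _ _ (Nat.mod_lt _ hn)
    have h2 : x ((m / n + 1) * n + m % n) = x (m % n) := hxper _ _ (Nat.mod_lt _ hn)
    have e1 : m / n * n + m % n = m := by rw [Nat.mul_comm]; exact Nat.div_add_mod m n
    have e2 : (m / n + 1) * n + m % n = m + n := by rw [Nat.add_mul, Nat.one_mul, Nat.add_right_comm, e1]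
    rw [e1] at h1; rw [e2] at h2; rw [h2, ← h1]
  have hiter : ∀ i, iterNA f i (iterNA f n z) = iterNA f (i + n) z := by
    intro i
    induction i with
    | zero => simp [iterNA]
    | succ i ih =>
        have e : i + 1 + n = i + n + 1 := by omega
        rw [e]
        show f i (iterNA f i (iterNA f n z)) = f (i + n) (iterNA f (i + n) z)
        rw [ih, hf i]
  have hshadow : ∀ i, dist (iterNA f i (iterNA f n z)) (x i) ≤ ε := by
    intro i
    rw [hiter i, ← hx i]
    exact hz (i + n)
  exact ⟨z, hz, hu _ hshadow, fun w hw => hu w hw⟩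
end
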